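/- arXiv:1711.00225 — 2 statements merged into one kernel-verified Lean document; each statement's English description precedes it below -/
import Mathlib

section
/- Let G be a connected graph and W' ⊆ V(G) with |W'| ≥ 2 such that every pair of vertices in W' is at distance at most 2. Then W' is not an m-resolving set of G. -/
open SimpleGraph

/-- The multiset of distances from `v` to the vertices of `W`. -/
noncomputable def mrep {V : Type*} (G : SimpleGraph V) (W : Finset V) (v : V) : Multiset ℕ :=
  W.val.map (fun w => G.dist v w)

/-- `W` is an m-resolving set of `G`: distinct vertices have distinct
representation multisets. -/
def IsMResolving {V : Type*} (G : SimpleGraph V) (W : Finset V) : Prop :=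
  ∀ u v : V, u ≠ v → mrep G W u ≠ mrep G W v

/-- The multiset dimension of `G`, equal to `⊤` if `G` has no m-resolving set. -/
noncomputable def mdim {V : Type*} (G : SimpleGraph V) : ℕ∞ :=
  ⨅ W : {W : Finset V // IsMResolving G W}, (W.1.card : ℕ∞)

/-!
For `w ∈ W'` the multiset `mrep G W' w` contains `0` once and otherwise only `1`s and `2`s, so it
is determined by its number `f w` of `1`s, which lies in `{0, …, |W'| - 1}`. If `W'` were
m-resolving, `f` would be injective on `W'`, hence would take both values `|W'| - 1` and `0`:
some `u` is adjacent to every other vertex of `W'`, while some `v ≠ u` is adjacent to none of them.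
-/

open Finset

theorem Multiset.card_eq_count_zero_add_count_one_add_count_two {s : Multiset ℕ}
    (hs : ∀ x ∈ s, x ≤ 2) : s.card = s.count 0 + s.count 1 + s.count 2 := by
  rw [← Multiset.sum_count_eq_card (s := Finset.range 3) fun x hx => mem_range.2 (by grind)]
  simp [sum_range_succ]

theorem Multiset.eq_of_count_zero_eq_of_count_one_eq {s t : Multiset ℕ}
    (hs : ∀ x ∈ s, x ≤ 2) (ht : ∀ x ∈ t, x ≤ 2) (hcard : s.card = t.card)
    (h0 : s.count 0 = t.count 0) (h1 : s.count 1 = t.count 1) : s = t := by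
  have h2 : s.count 2 = t.count 2 := by
    have := card_eq_count_zero_add_count_one_add_count_two hs
    have := card_eq_count_zero_add_count_one_add_count_two ht
    omega
  ext n
  match n with
  | 0 => exact h0
  | 1 => exact h1
  | 2 => exact h2
  | n + 3 =>
    rw [Multiset.count_eq_zero.2 fun h => by grind, Multiset.count_eq_zero.2 fun h => by grind]

section

variable {V : Type*} {G : SimpleGraph V} {W : Finset V} {u v : V}

theorem card_mrep : (mrep G W v).card = #W := by
  simp [mrep]

theorem count_mrep (n : ℕ) : (mrep G W v).count n = #{w ∈ W | G.dist v w = n} := by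
  classical
  simp only [mrep, Multiset.count_map, card, Finset.filter_val]
  congr 1
  exact Multiset.filter_congr fun _ _ => eq_comm

theorem count_zero_mrep (hG : G.Connected) (hv : v ∈ W) : (mrep G W v).count 0 = 1 := by
  rw [count_mrep, card_eq_one]
  exact ⟨v, by ext w; simp only [mem_filter, mem_singleton, hG.dist_eq_zero_iff]; grind⟩

theorem count_one_mrep_lt_card (hv : v ∈ W) : (mrep G W v).count 1 < #W := by
  rw [count_mrep]
  exact card_lt_card (filter_ssubset.2 ⟨v, hv, by simp⟩)

theorem dist_eq_one_of_count_one_mrep_eq (hu : u ∈ W) (h : (mrep G W u).count 1 = #W - 1)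
    (hv : v ∈ W) (hvu : v ≠ u) : G.dist u v = 1 := by
  classical
  have hsub : {w ∈ W | G.dist u w = 1} ⊆ W.erase u := fun w hw => by
    rw [mem_filter] at hw
    exact mem_erase.2 ⟨by rintro rfl; simp at hw, hw.1⟩
  rw [count_mrep, ← card_erase_of_mem hu] at h
  have hmem : v ∈ {w ∈ W | G.dist u w = 1} := by
    rw [eq_of_subset_of_card_le hsub h.ge]
    exact mem_erase.2 ⟨hvu, hv⟩
  exact (mem_filter.1 hmem).2

theorem mrep_eq_of_count_one_eq (hG : G.Connected) (hW : ∀ u ∈ W, ∀ v ∈ W, G.dist u v ≤ 2)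
    (hu : u ∈ W) (hv : v ∈ W) (h : (mrep G W u).count 1 = (mrep G W v).count 1) :
    mrep G W u = mrep G W v := by
  have hle {x : V} (hx : x ∈ W) : ∀ n ∈ mrep G W x, n ≤ 2 := by
    simp only [mrep, Multiset.mem_map]
    rintro _ ⟨w, hw, rfl⟩
    exact hW x hx w hw
  exact Multiset.eq_of_count_zero_eq_of_count_one_eq (hle hu) (hle hv)
    (card_mrep.trans card_mrep.symm)
    ((count_zero_mrep hG hu).trans (count_zero_mrep hG hv).symm) h

end

theorem stmt_6 {V : Type*} (G : SimpleGraph V) (hG : G.Connected) (W' : Finset V)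
    (hcard : 2 ≤ W'.card) (hd : ∀ u ∈ W', ∀ v ∈ W', G.dist u v ≤ 2) :
    ¬ IsMResolving G W' := by
  intro hres
  set f : V → ℕ := fun w => (mrep G W' w).count 1
  have hinj : Set.InjOn f W' := fun u hu v hv huv => by
    by_contra hne
    exact hres u v hne (mrep_eq_of_count_one_eq hG hd hu hv huv)
  have hsurj : Set.SurjOn f W' (range #W') :=
    surjOn_of_injOn_of_card_le f (fun v hv => mem_range.2 (count_one_mrep_lt_card hv)) hinj
      (card_range _).le
  obtain ⟨u, hu, hfu⟩ := hsurj (mem_range.2 (by omega : #W' - 1 < #W'))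
  obtain ⟨v, hv, hfv⟩ := hsurj (mem_range.2 (by omega : 0 < #W'))
  have hvu : v ≠ u := by rintro rfl; omega
  have hdist : G.dist v u = 1 := by
    rw [dist_comm]
    exact dist_eq_one_of_count_one_mrep_eq hu hfu hv hvu
  have hone : 1 ∈ mrep G W' v := Multiset.mem_map.2 ⟨u, hu, hdist⟩
  exact Multiset.count_ne_zero.2 hone hfv
end

section
/- Let G be a connected graph containing three pairwise twin vertices v1, v2, v3 (i.e., any two of them are twins). Then G has no m-resolving set, i.e., md(G) = ∞. -/
open SimpleGraph

/-- Two vertices are twins if they have the same neighbours apart from each other. -/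
def Twins {V : Type*} (G : SimpleGraph V) (u v : V) : Prop :=
  G.neighborSet u \ {v} = G.neighborSet v \ {u}

/-!
Swapping two twins is an automorphism of `G`, and automorphisms preserve distances. Hence if
`W` contains both or neither of two twins `u`, `v`, the swap fixes `W` and carries the
representation of `u` to that of `v`. Among three pairwise twins, two lie on the same side of `W`.
-/

section

variable {V V' : Type*} {G : SimpleGraph V} {G' : SimpleGraph V'}

namespace SimpleGraph

theorem Hom.edist_map_le (f : G →g G') (u v : V) : G'.edist (f u) (f v) ≤ G.edist u v := by
  by_cases hr : G.Reachable u v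
  · obtain ⟨p, hp⟩ := hr.exists_walk_length_eq_edist
    rw [← hp]
    exact (edist_le (p.map f)).trans_eq (by rw [Walk.length_map])
  · rw [edist_eq_top_of_not_reachable hr]
    exact le_top

theorem Iso.edist_map (f : G ≃g G') (u v : V) : G'.edist (f u) (f v) = G.edist u v :=
  le_antisymm (Hom.edist_map_le f.toHom u v) <| by
    simpa using Hom.edist_map_le f.symm.toHom (f u) (f v)

theorem Iso.dist_map (f : G ≃g G') (u v : V) : G'.dist (f u) (f v) = G.dist u v :=
  congrArg ENat.toNat (f.edist_map u v)

end SimpleGraph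

variable {u v w : V}

theorem Twins.adj_iff (h : Twins G u v) (hwu : w ≠ u) (hwv : w ≠ v) :
    G.Adj u w ↔ G.Adj v w := by
  simpa [hwu, hwv] using Set.ext_iff.mp h w

def Twins.swapIso [DecidableEq V] (h : Twins G u v) : G ≃g G where
  toEquiv := Equiv.swap u v
  map_rel_iff' {a b} := by
    simp only [Equiv.swap_apply_def]
    split_ifs <;> subst_vars <;> grind [h.adj_iff, G.adj_comm, G.irrefl]

theorem mrep_map_iso (f : G ≃g G') (W : Finset V) (v : V) :
    mrep G' (W.map f.toEquiv.toEmbedding) (f v) = mrep G W v := by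
  simp only [mrep, Finset.map_val, Multiset.map_map]
  exact Multiset.map_congr rfl fun w _ => f.dist_map v w

theorem Finset.map_swap_eq_self [DecidableEq V] {W : Finset V} (hW : u ∈ W ↔ v ∈ W) :
    W.map (Equiv.swap u v).toEmbedding = W := by
  ext x
  rw [Finset.mem_map_equiv, Equiv.symm_swap, Equiv.swap_apply_def]
  split_ifs with hxu hxv <;> subst_vars <;> tauto

theorem Twins.mrep_eq (h : Twins G u v) {W : Finset V} (hW : u ∈ W ↔ v ∈ W) :
    mrep G W u = mrep G W v := by
  classical
  calc mrep G W u = mrep G (W.map h.swapIso.toEquiv.toEmbedding) (h.swapIso u) :=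
        (mrep_map_iso h.swapIso W u).symm
    _ = mrep G W v := by
        rw [show h.swapIso.toEquiv = Equiv.swap u v from rfl, Finset.map_swap_eq_self hW]
        exact congrArg _ (Equiv.swap_apply_left u v)

theorem Twins.not_isMResolving (h : Twins G u v) (huv : u ≠ v) {W : Finset V}
    (hW : u ∈ W ↔ v ∈ W) : ¬IsMResolving G W :=
  fun hres => hres u v huv (h.mrep_eq hW)

theorem mdim_eq_top_iff : mdim G = ⊤ ↔ ∀ W : Finset V, ¬IsMResolving G W := by
  simp [mdim, iInf_eq_top]

end

theorem stmt_9_general {V : Type*} (G : SimpleGraph V) (v₁ v₂ v₃ : V)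
    (h12 : v₁ ≠ v₂) (h13 : v₁ ≠ v₃) (h23 : v₂ ≠ v₃)
    (t12 : Twins G v₁ v₂) (t13 : Twins G v₁ v₃) (t23 : Twins G v₂ v₃) :
    (∀ W : Finset V, ¬ IsMResolving G W) ∧ mdim G = ⊤ := by
  have no_resolving : ∀ W : Finset V, ¬ IsMResolving G W := by
    intro W
    by_cases h₁₂ : v₁ ∈ W ↔ v₂ ∈ W
    · exact t12.not_isMResolving h12 h₁₂
    by_cases h₁₃ : v₁ ∈ W ↔ v₃ ∈ W
    · exact t13.not_isMResolving h13 h₁₃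
    exact t23.not_isMResolving h23 (by tauto)
  exact ⟨no_resolving, mdim_eq_top_iff.mpr no_resolving⟩

theorem stmt_9 {V : Type*} (G : SimpleGraph V) (hG : G.Connected) (v₁ v₂ v₃ : V)
    (h12 : v₁ ≠ v₂) (h13 : v₁ ≠ v₃) (h23 : v₂ ≠ v₃)
    (t12 : Twins G v₁ v₂) (t13 : Twins G v₁ v₃) (t23 : Twins G v₂ v₃) :
    (∀ W : Finset V, ¬ IsMResolving G W) ∧ mdim G = ⊤ :=
  stmt_9_general G v₁ v₂ v₃ h12 h13 h23 t12 t13 t23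
end
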